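/- arXiv:1903.06358 — 4 statements merged into one kernel-verified Lean document; each statement's English description precedes it below -/
import Mathlib

section
/- Let H be a finite dimensional Hopf algebra over a field k and A a k-algebra with a multiplicative, counital right H-comodule structure ρ : A → A ⊗ H. Then ρ(1) = 1 ⊗ 1; in particular ρ is a homomorphism of unital algebras. -/
open TensorProduct

variable {k : Type*} [Field k]
variable {H : Type*} [Ring H] [HopfAlgebra k H] [FiniteDimensional k H]
variable {A : Type*} [Ring A] [Algebra k A]

/-- if `H` is a finite dimensional Hopf algebra over a field `k` and `A` is a
`k`-algebra with a multiplicative, coassociative, counital right `H`-comodule structure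
`ρ : A → A ⊗ H`, then `ρ(1) = 1 ⊗ 1`; in particular `ρ` is a homomorphism of unital
algebras. -/
theorem comodule_algebra_map_one (ρ : A →ₗ[k] A ⊗[k] H)
    (hmul : ∀ a b : A, ρ (a * b) = ρ a * ρ b)
    (hcoassoc : ∀ a : A,
      (TensorProduct.assoc k A H H) ((TensorProduct.map ρ LinearMap.id) (ρ a)) =
        (TensorProduct.map LinearMap.id (Coalgebra.comul (R := k) (A := H))) (ρ a))
    (hcounit : ∀ a : A,
      (TensorProduct.rid k A)
        ((TensorProduct.map LinearMap.id (Coalgebra.counit (R := k) (A := H))) (ρ a)) = a) :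
    ρ 1 = (1 : A) ⊗ₜ[k] (1 : H) := by
  set S : H →ₗ[k] H := HopfAlgebra.antipode (R := k) (A := H) with hS
  have key : ∀ z : A ⊗[k] H, ρ 1 * z = z := by
    intro z
    induction z using TensorProduct.induction_on with
    | zero => simp
    | add u v hu hv => rw [mul_add, hu, hv]
    | tmul a h =>
      -- the "inverse of the Galois map" trick
      set mh : H ⊗[k] H →ₗ[k] H :=
        (LinearMap.mulRight k h) ∘ₗ (LinearMap.mul' k H) ∘ₗ (LinearMap.lTensor H S) with hmh
      set G : A ⊗[k] H →ₗ[k] A ⊗[k] H :=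
        (LinearMap.lTensor A mh) ∘ₗ (TensorProduct.assoc k A H H).toLinearMap ∘ₗ
          (TensorProduct.map ρ LinearMap.id) with hGdef
      -- claim 1 : G (ρ a) = a ⊗ h
      have step1 : ∀ w : A ⊗[k] H,
          (LinearMap.lTensor A mh) ((TensorProduct.map LinearMap.id
            (Coalgebra.comul (R := k) (A := H))) w) =
          (LinearMap.lTensor A (LinearMap.toSpanSingleton k H h))
            ((TensorProduct.map LinearMap.id (Coalgebra.counit (R := k) (A := H))) w) := by
        intro w
        induction w using TensorProduct.induction_on with
        | zero => simp
        | add u v hu hv => simp [map_add, hu, hv]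
        | tmul b g =>
          simp only [TensorProduct.map_tmul, LinearMap.lTensor_tmul, LinearMap.id_coe, id_eq,
            hmh, LinearMap.coe_comp, Function.comp_apply, LinearMap.mulRight_apply,
            LinearMap.toSpanSingleton_apply]
          rw [hS, HopfAlgebra.mul_antipode_lTensor_comul_apply, Algebra.smul_def]
      have step2 : ∀ z : A ⊗[k] k,
          (LinearMap.lTensor A (LinearMap.toSpanSingleton k H h)) z =
            (TensorProduct.rid k A) z ⊗ₜ[k] h := by
        intro z
        induction z using TensorProduct.induction_on with
        | zero => simp
        | add u v hu hv => simp [map_add, hu, hv, TensorProduct.add_tmul]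
        | tmul b c =>
          simp only [LinearMap.lTensor_tmul, LinearMap.toSpanSingleton_apply,
            TensorProduct.rid_tmul]
          rw [TensorProduct.smul_tmul]
      have claim1 : G (ρ a) = a ⊗ₜ[k] h := by
        rw [hGdef]
        simp only [LinearMap.coe_comp, Function.comp_apply, LinearEquiv.coe_coe]
        rw [hcoassoc a, step1, step2, hcounit a]
      -- claim 2 : ∀ z, G z = ρ (something) * (pure tensor), hence ρ 1 * G z = G z
      have claim2 : ∀ z : A ⊗[k] H, ρ 1 * G z = G z := by
        intro z
        induction z using TensorProduct.induction_on with
        | zero => simp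
        | add u v hu hv => rw [map_add, mul_add, hu, hv]
        | tmul b g =>
          have hGbg : G (b ⊗ₜ[k] g) = ρ b * ((1 : A) ⊗ₜ[k] (S g * h)) := by
            rw [hGdef]
            simp only [LinearMap.coe_comp, Function.comp_apply, LinearEquiv.coe_coe,
              TensorProduct.map_tmul, LinearMap.id_coe, id_eq]
            induction ρ b using TensorProduct.induction_on with
            | zero =>
              rw [TensorProduct.zero_tmul, LinearEquiv.map_zero, map_zero, zero_mul]
            | add u v hu hv =>
              simp only [TensorProduct.add_tmul, map_add, add_mul, hu, hv]
            | tmul b0 b1 =>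
              simp only [TensorProduct.assoc_tmul, LinearMap.lTensor_tmul, hmh,
                LinearMap.coe_comp, Function.comp_apply, LinearMap.mulRight_apply,
                LinearMap.mul'_apply, Algebra.TensorProduct.tmul_mul_tmul, mul_one, mul_assoc]
          rw [hGbg, ← mul_assoc, ← hmul, one_mul]
      calc ρ 1 * (a ⊗ₜ[k] h) = ρ 1 * G (ρ a) := by rw [claim1]
        _ = G (ρ a) := claim2 _
        _ = a ⊗ₜ[k] h := claim1
  have := key 1
  rw [mul_one] at this
  rw [this, Algebra.TensorProduct.one_def]
end

section
/- Let H be a finite dimensional Hopf algebra and A an H-module algebra having no H-stable left ideals other than 0 and A. Then the invariant subring A^H is a skew field (division ring). -/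
open TensorProduct

variable {k : Type*} [Field k]
variable {H : Type*} [Ring H] [HopfAlgebra k H] [FiniteDimensional k H]
variable {A : Type*} [Ring A] [Algebra k A]

/-- The action of `H` on `A ⊗[k] A` through the comultiplication of `H`. -/
noncomputable def tensorAct (act : H →ₗ[k] A →ₗ[k] A) :
    H →ₗ[k] (A ⊗[k] A) →ₗ[k] (A ⊗[k] A) :=
  (TensorProduct.homTensorHomMap (RingHom.id k) A A A A).comp
    ((TensorProduct.map act act).comp (Coalgebra.comul (R := k) (A := H)))

/-- `act` makes the `k`-algebra `A` into a (left) `H`-module algebra: `A` is a left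
`H`-module and the multiplication map `A ⊗ A → A` is `H`-linear, `H` acting on the tensor
product via the comultiplication. -/
structure IsModuleAlgebra (act : H →ₗ[k] A →ₗ[k] A) : Prop where
  act_one : ∀ a : A, act 1 a = a
  act_mul : ∀ g h : H, ∀ a : A, act (g * h) a = act g (act h a)
  smul_one : ∀ h : H, act h 1 = Coalgebra.counit (R := k) h • (1 : A)
  mul_compat : ∀ h : H,
    (LinearMap.mul' k A).comp (tensorAct act h) = (act h).comp (LinearMap.mul' k A)

set_option linter.unusedSectionVars false in
lemma act_mul_inv (act : H →ₗ[k] A →ₗ[k] A) (hma : IsModuleAlgebra act) {a : A}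
    (ha : ∀ h : H, act h a = Coalgebra.counit (R := k) h • a) (h : H) (x : A) :
    act h (x * a) = act h x * a := by
  have hc := LinearMap.congr_fun (hma.mul_compat h) (x ⊗ₜ[k] a)
  simp only [LinearMap.comp_apply, LinearMap.mul'_apply] at hc
  rw [← hc]
  obtain ⟨s, hs⟩ := TensorProduct.exists_finset (R := k) (Coalgebra.comul (R := k) h)
  have hrep : ∑ p ∈ s, Coalgebra.counit (R := k) p.2 • p.1 = h := by
    have := Coalgebra.lTensor_counit_comul (R := k) h
    rw [hs, map_sum] at this
    have := congrArg (TensorProduct.rid k H) this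
    simpa [map_sum, TensorProduct.smul_tmul'] using this
  have : tensorAct act h (x ⊗ₜ[k] a) = ∑ p ∈ s, (act p.1 x) ⊗ₜ[k] (act p.2 a) := by
    simp [tensorAct, hs, map_sum]
  rw [this, map_sum]
  simp only [LinearMap.mul'_apply, ha, smul_mul_assoc]
  have hx : ∑ p ∈ s, Coalgebra.counit (R := k) p.2 • act p.1 x = act h x := by
    conv_rhs => rw [← hrep]
    simp [map_sum, LinearMap.sum_apply]
  calc ∑ p ∈ s, act p.1 x * Coalgebra.counit (R := k) p.2 • a
      = (∑ p ∈ s, Coalgebra.counit (R := k) p.2 • act p.1 x) * a := by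
        simp [Finset.sum_mul, mul_smul_comm, smul_mul_assoc]
    _ = act h x * a := by rw [hx]

/-- let `H` be a finite dimensional Hopf algebra and `A` a nonzero
`H`-module algebra having no `H`-stable left ideals other than `0` and `A`.  Then the
invariant subring `A^H = {a | ha = ε(h)a}` is a skew field: every nonzero invariant
element has a (two-sided, invariant) multiplicative inverse. -/
theorem invariants_division_ring_of_no_stable_left_ideals
    (act : H →ₗ[k] A →ₗ[k] A) (hma : IsModuleAlgebra act)
    [Nontrivial A]
    (hsimple : ∀ I : Submodule k A, (∀ a : A, ∀ x ∈ I, a * x ∈ I) →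
      (∀ h : H, ∀ x ∈ I, act h x ∈ I) → I = ⊥ ∨ I = ⊤) :
    ∀ a : A, (∀ h : H, act h a = Coalgebra.counit (R := k) h • a) → a ≠ 0 →
      ∃ b : A, (∀ h : H, act h b = Coalgebra.counit (R := k) h • b) ∧
        a * b = 1 ∧ b * a = 1 := by
  intro a ha hane
  set f : A →ₗ[k] A := LinearMap.mulRight k a with hf
  have hfapp : ∀ x : A, f x = x * a := fun x => rfl
  -- the range of f is all of A
  have hrange : LinearMap.range f = ⊤ := by
    rcases hsimple (LinearMap.range f)
      (fun c x hx => by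
        obtain ⟨y, rfl⟩ := hx
        exact ⟨c * y, by simp [hfapp, mul_assoc]⟩)
      (fun h x hx => by
        obtain ⟨y, rfl⟩ := hx
        exact ⟨act h y, by simp [hfapp, act_mul_inv act hma ha]⟩) with h0 | h1
    · exfalso
      have : a ∈ LinearMap.range f := ⟨1, by simp [hfapp]⟩
      rw [h0] at this
      simp at this
      exact hane this
    · exact h1
  -- f is injective
  have hker : LinearMap.ker f = ⊥ := by
    rcases hsimple (LinearMap.ker f)
      (fun c x hx => by
        simp only [LinearMap.mem_ker, hfapp] at hx ⊢
        rw [mul_assoc, hx, mul_zero])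
      (fun h x hx => by
        simp only [LinearMap.mem_ker, hfapp] at hx ⊢
        rw [← act_mul_inv act hma ha, hx, map_zero]) with h0 | h1
    · exact h0
    · exfalso
      have : (1 : A) ∈ LinearMap.ker f := h1 ▸ Submodule.mem_top
      simp only [LinearMap.mem_ker, hfapp, one_mul] at this
      exact hane this
  have hinj : ∀ x y : A, x * a = y * a → x = y := by
    intro x y hxy
    have : x - y ∈ LinearMap.ker f := by
      simp [LinearMap.mem_ker, hfapp, sub_mul, hxy]
    rw [hker] at this
    simpa [sub_eq_zero] using this
  obtain ⟨b, hb⟩ : ∃ b : A, b * a = 1 := by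
    have : (1 : A) ∈ LinearMap.range f := hrange ▸ Submodule.mem_top
    obtain ⟨b, hb⟩ := this
    exact ⟨b, hb⟩
  refine ⟨b, ?_, ?_, hb⟩
  · intro h
    apply hinj
    rw [← act_mul_inv act hma ha, hb, hma.smul_one, smul_mul_assoc, hb]
  · apply hinj
    rw [mul_assoc, hb, mul_one, one_mul]
end

section
/- Let H be a finite dimensional Hopf algebra and A an H-module algebra with no nontrivial H-stable left ideals. Then the map γ : A ⊗_{A^H} A → A ⊗ H*, a ⊗ b ↦ (a ⊗ 1)·ρ(b), is injective. -/
set_option linter.unusedSectionVars false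
set_option maxHeartbeats 1000000
set_option synthInstance.maxHeartbeats 400000


open TensorProduct

variable {k : Type*} [Field k]
variable {K : Type*} [Ring K] [HopfAlgebra k K] [FiniteDimensional k K]
variable {A : Type*} [Ring A] [Algebra k A]

/-- `ρ` makes `A` into a (right) `K`-comodule algebra; for `K = H*` the dual of a finite
dimensional Hopf algebra `H`, this is the same thing as an `H`-module algebra structure,
with `ρ(a)(h) = ha` under `A ⊗ H* ≅ Hom(H, A)`. -/
structure IsComoduleAlgebra (ρ : A →ₐ[k] A ⊗[k] K) : Prop where
  coassoc : ∀ a : A,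
    (TensorProduct.assoc k A K K) ((TensorProduct.map ρ.toLinearMap LinearMap.id) (ρ a)) =
      (TensorProduct.map LinearMap.id (Coalgebra.comul (R := k) (A := K))) (ρ a)
  counit_id : ∀ a : A,
    (TensorProduct.rid k A)
      ((TensorProduct.map LinearMap.id (Coalgebra.counit (R := k) (A := K))) (ρ a)) = a

/-- The subalgebra of coinvariants `A^{co K}`; for `K = H*` this is the invariant
subalgebra `A^H`. -/
def coinvariants (ρ : A →ₐ[k] A ⊗[k] K) : Subalgebra k A where
  carrier := {a | ρ a = a ⊗ₜ[k] 1}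
  one_mem' := by
    simp only [Set.mem_setOf_eq, map_one, Algebra.TensorProduct.one_def]
  mul_mem' := by
    intro a b ha hb
    simp only [Set.mem_setOf_eq] at ha hb ⊢
    rw [map_mul, ha, hb, Algebra.TensorProduct.tmul_mul_tmul, mul_one]
  add_mem' := by
    intro a b ha hb
    simp only [Set.mem_setOf_eq] at ha hb ⊢
    rw [map_add, ha, hb, TensorProduct.add_tmul]
  algebraMap_mem' := by
    intro r
    show ρ (algebraMap k A r) = (algebraMap k A r) ⊗ₜ[k] 1
    rw [AlgHom.commutes, Algebra.TensorProduct.algebraMap_apply]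

/-- The `k`-linear "Galois" map `β : A ⊗[k] A → A ⊗ K`, `a ⊗ b ↦ (a ⊗ 1)·ρ(b)`. -/
noncomputable def galoisMap (ρ : A →ₐ[k] A ⊗[k] K) : A ⊗[k] A →ₗ[k] A ⊗[k] K :=
  TensorProduct.lift
    (LinearMap.mk₂ k (fun a b => (a ⊗ₜ[k] (1 : K)) * ρ b)
      (fun a a' b => by simp [TensorProduct.add_tmul, add_mul])
      (fun c a b => by try simp only []
                       rw [show (c • a) ⊗ₜ[k] (1 : K) = c • (a ⊗ₜ[k] (1 : K)) from TensorProduct.smul_tmul' c a 1, smul_mul_assoc])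
      (fun a b b' => by simp [mul_add])
      (fun c a b => by simp [mul_smul_comm]))

/-- The submodule of `A ⊗[k] A` of relations defining `A ⊗_{A^H} A` as a quotient of
`A ⊗[k] A`. -/
def balancedRelations (ρ : A →ₐ[k] A ⊗[k] K) : Submodule k (A ⊗[k] A) :=
  Submodule.span k {x : A ⊗[k] A | ∃ a b c : A, c ∈ coinvariants ρ ∧
    x = (a * c) ⊗ₜ[k] b - a ⊗ₜ[k] (c * b)}

/-- A `k`-submodule `I ⊆ A` is costable (i.e. `H`-stable for `K = H*`) if
`ρ(I) ⊆ I ⊗ K`. -/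
def IsCostable (ρ : A →ₐ[k] A ⊗[k] K) (I : Submodule k A) : Prop :=
  ∀ a ∈ I, ρ a ∈ LinearMap.range (TensorProduct.map I.subtype (LinearMap.id (R := k) (M := K)))

namespace Stmt9

open Module LinearMap

/-- contraction of the second tensor factor with a functional -/
noncomputable def ctr (h : Module.Dual k K) : A ⊗[k] K →ₗ[k] A :=
  (TensorProduct.rid k A).toLinearMap ∘ₗ LinearMap.lTensor A h

@[simp] lemma ctr_tmul (h : Module.Dual k K) (a : A) (v : K) :
    ctr h (a ⊗ₜ[k] v) = h v • a := by simp [ctr]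

/-- the action of `Dual k K` on `A` induced by `ρ` -/
noncomputable def Top (ρ : A →ₐ[k] A ⊗[k] K) (h : Module.Dual k K) : A →ₗ[k] A :=
  ctr h ∘ₗ ρ.toLinearMap

lemma Top_apply (ρ : A →ₐ[k] A ⊗[k] K) (h : Module.Dual k K) (a : A) :
    Top ρ h a = ctr h (ρ a) := rfl

/-- expansion of an element of `A ⊗ K` along a basis of `K` -/
lemma ctr_expand (x : A ⊗[k] K) :
    x = ∑ i, (ctr ((Module.finBasis k K).coord i) x) ⊗ₜ[k] (Module.finBasis k K i) := by
  set B := Module.finBasis k K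
  induction x using TensorProduct.induction_on with
  | zero => simp
  | tmul a v =>
      simp only [ctr_tmul]
      rw [show ∑ i, (B.coord i v • a) ⊗ₜ[k] B i = a ⊗ₜ[k] (∑ i, B.coord i v • B i) by
        rw [TensorProduct.tmul_sum]
        exact Finset.sum_congr rfl fun i _ => by
          rw [TensorProduct.smul_tmul, TensorProduct.tmul_smul]]
      simp only [Basis.coord_apply]
      rw [B.sum_repr v]
  | add x y hx hy =>
      conv_lhs => rw [hx, hy]
      rw [← Finset.sum_add_distrib]
      exact Finset.sum_congr rfl fun i _ => by rw [map_add, TensorProduct.add_tmul]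

lemma ctr_sep {x : A ⊗[k] K} (h0 : ∀ h : Module.Dual k K, ctr h x = 0) : x = 0 := by
  rw [ctr_expand x]; simp [h0]

variable (ρ : A →ₐ[k] A ⊗[k] K)

lemma ctr_lTensor (h : Module.Dual k K) (f : K →ₗ[k] K) (x : A ⊗[k] K) :
    ctr h (LinearMap.lTensor A f x) = ctr (h ∘ₗ f) x := by
  induction x using TensorProduct.induction_on with
  | zero => simp
  | tmul a v => simp
  | add x y hx hy => simp [hx, hy]

lemma ctr_tmul_mul (h : Module.Dual k K) (x : A) (v : K) (y : A ⊗[k] K) :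
    ctr h ((x ⊗ₜ[k] v) * y) = x * ctr (h ∘ₗ LinearMap.mulLeft k v) y := by
  induction y using TensorProduct.induction_on with
  | zero => simp
  | tmul e w => simp [Algebra.TensorProduct.tmul_mul_tmul, mul_smul_comm]
  | add y z hy hz => simp [mul_add, hy, hz]

lemma ctr_mul_tmul_one (h : Module.Dual k K) (z : A ⊗[k] K) (b : A) :
    ctr h (z * (b ⊗ₜ[k] (1 : K))) = ctr h z * b := by
  induction z using TensorProduct.induction_on with
  | zero => simp
  | tmul c v => simp [Algebra.TensorProduct.tmul_mul_tmul, smul_mul_assoc]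
  | add y z hy hz => simp [add_mul, hy, hz]

lemma Top_counit (hco : IsComoduleAlgebra ρ) (a : A) :
    Top ρ (Coalgebra.counit (R := k) (A := K)) a = a := by
  have h := hco.counit_id a
  rw [Top_apply, ctr, LinearMap.comp_apply]
  rw [show LinearMap.lTensor A (Coalgebra.counit (R := k) (A := K)) =
    TensorProduct.map LinearMap.id (Coalgebra.counit (R := k) (A := K)) from rfl]
  exact h

lemma Top_one (h : Module.Dual k K) : Top ρ h (1 : A) = h 1 • 1 := by
  rw [Top_apply, map_one, Algebra.TensorProduct.one_def, ctr_tmul]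

/-- If a submodule is stable under all the `Top` operators then it is costable. -/
lemma costable_of_T (I : Submodule k A) (hT : ∀ (h : Module.Dual k K), ∀ x ∈ I, Top ρ h x ∈ I) :
    IsCostable ρ I := by
  intro a ha
  refine ⟨∑ i, (⟨Top ρ ((Module.finBasis k K).coord i) a, hT _ a ha⟩ : I) ⊗ₜ[k]
    (Module.finBasis k K i), ?_⟩
  rw [map_sum]
  simp only [TensorProduct.map_tmul, Submodule.coe_subtype, LinearMap.id_coe, id_eq]
  exact (ctr_expand (ρ a)).symm

/-- the operator on `K` dual to precomposition of `Top` -/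
noncomputable def Dop (g : Module.Dual k K) : K →ₗ[k] K :=
  (TensorProduct.rid k K).toLinearMap ∘ₗ LinearMap.lTensor K g ∘ₗ
    Coalgebra.comul (R := k) (A := K)

lemma rho_Top (hco : IsComoduleAlgebra ρ) (g : Module.Dual k K) (a : A) :
    ρ (Top ρ g a) = LinearMap.lTensor A (Dop g) (ρ a) := by
  have key : ∀ x : A ⊗[k] K,
      (LinearMap.lTensor A ((TensorProduct.rid k K).toLinearMap ∘ₗ LinearMap.lTensor K g))
        ((TensorProduct.assoc k A K K) ((LinearMap.rTensor K ρ.toLinearMap) x))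
      = ρ (ctr g x) := by
    intro x
    induction x using TensorProduct.induction_on with
    | zero => simp
    | tmul c v =>
        simp only [LinearMap.rTensor_tmul, AlgHom.toLinearMap_apply, ctr_tmul, map_smul]
        induction (ρ c) using TensorProduct.induction_on with
        | zero => simp
        | tmul e w =>
            simp [TensorProduct.assoc_tmul, TensorProduct.smul_tmul, TensorProduct.tmul_smul]
        | add y z hy hz =>
            rw [TensorProduct.add_tmul, map_add, map_add, hy, hz, smul_add]
    | add x y hx hy => simp only [map_add, hx, hy]
  have coas := hco.coassoc a
  calc ρ (Top ρ g a)
      = (LinearMap.lTensor A ((TensorProduct.rid k K).toLinearMap ∘ₗ LinearMap.lTensor K g))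
        ((TensorProduct.assoc k A K K) ((LinearMap.rTensor K ρ.toLinearMap) (ρ a))) :=
        (key (ρ a)).symm
    _ = (LinearMap.lTensor A ((TensorProduct.rid k K).toLinearMap ∘ₗ LinearMap.lTensor K g))
        ((TensorProduct.map LinearMap.id (Coalgebra.comul (R := k) (A := K))) (ρ a)) := by
        rw [show (LinearMap.rTensor K ρ.toLinearMap) (ρ a) =
          (TensorProduct.map ρ.toLinearMap LinearMap.id) (ρ a) from rfl, coas]
    _ = LinearMap.lTensor A (Dop g) (ρ a) := by
        rw [show (TensorProduct.map LinearMap.id (Coalgebra.comul (R := k) (A := K))) (ρ a) =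
          (LinearMap.lTensor A (Coalgebra.comul (R := k) (A := K))) (ρ a) from rfl,
          ← LinearMap.comp_apply, ← LinearMap.lTensor_comp]
        rfl

lemma Top_Top (hco : IsComoduleAlgebra ρ) (h g : Module.Dual k K) (a : A) :
    Top ρ h (Top ρ g a) = Top ρ (h ∘ₗ Dop g) a := by
  rw [Top_apply, rho_Top ρ hco, ctr_lTensor]; rfl

lemma Top_mul (h : Module.Dual k K) (a x : A) :
    Top ρ h (a * x) = ∑ i, Top ρ ((Module.finBasis k K).coord i) a *
      Top ρ (h ∘ₗ LinearMap.mulLeft k (Module.finBasis k K i)) x := by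
  rw [Top_apply, map_mul]
  conv_lhs => rw [ctr_expand (ρ a)]
  rw [Finset.sum_mul, map_sum]
  exact Finset.sum_congr rfl fun i _ => by rw [ctr_tmul_mul]; rfl

/-- multiplication against the antipode: `v ⊗ w ↦ v * S(w)` -/
noncomputable def mAnti : K ⊗[k] K →ₗ[k] K :=
  LinearMap.mul' k K ∘ₗ LinearMap.lTensor K (HopfAlgebra.antipode (R := k) (A := K))

@[simp] lemma mAnti_tmul (v w : K) :
    mAnti (v ⊗ₜ[k] w) = v * HopfAlgebra.antipode (R := k) w := by
  simp [mAnti]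

/-- the "flip" operator `A ⊗ K → A ⊗ K` -/
noncomputable def Phi (ρ : A →ₐ[k] A ⊗[k] K) : A ⊗[k] K →ₗ[k] A ⊗[k] K :=
  LinearMap.lTensor A mAnti ∘ₗ (TensorProduct.assoc k A K K).toLinearMap ∘ₗ
    LinearMap.rTensor K ρ.toLinearMap

lemma key4 (w : A ⊗[k] K) (y : (A ⊗[k] K) ⊗[k] K) :
    LinearMap.lTensor A mAnti ((TensorProduct.assoc k A K K) ((w ⊗ₜ[k] (1 : K)) * y)) =
      w * LinearMap.lTensor A mAnti ((TensorProduct.assoc k A K K) y) := by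
  induction w using TensorProduct.induction_on with
  | zero => simp
  | tmul c d =>
      induction y using TensorProduct.induction_on with
      | zero => simp
      | tmul u v' =>
          induction u using TensorProduct.induction_on with
          | zero => simp
          | tmul e v =>
              simp only [Algebra.TensorProduct.tmul_mul_tmul, one_mul,
                TensorProduct.assoc_tmul, LinearMap.lTensor_tmul, mAnti_tmul, mul_assoc]
          | add u₁ u₂ h₁ h₂ =>
              simp only [TensorProduct.add_tmul, mul_add, map_add, h₁, h₂]
      | add y₁ y₂ h₁ h₂ =>
          simp only [mul_add, map_add, h₁, h₂]
  | add w₁ w₂ h₁ h₂ =>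
      simp only [TensorProduct.add_tmul, add_mul, map_add, h₁, h₂]

lemma step1 (ρ : A →ₐ[k] A ⊗[k] K) (a : A) (x : A ⊗[k] K) :
    LinearMap.rTensor K ρ.toLinearMap ((a ⊗ₜ[k] (1 : K)) * x) =
      ((ρ a) ⊗ₜ[k] (1 : K)) * LinearMap.rTensor K ρ.toLinearMap x := by
  induction x using TensorProduct.induction_on with
  | zero => simp
  | tmul e v =>
      simp only [Algebra.TensorProduct.tmul_mul_tmul, one_mul, LinearMap.rTensor_tmul,
        AlgHom.toLinearMap_apply, map_mul]
  | add x y hx hy => rw [mul_add, map_add, map_add, hx, hy, mul_add]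

lemma count_aux (z : A ⊗[k] k) :
    LinearMap.lTensor A (Algebra.linearMap k K) z = (TensorProduct.rid k A z) ⊗ₜ[k] (1 : K) := by
  induction z using TensorProduct.induction_on with
  | zero => simp
  | tmul a r =>
      simp only [LinearMap.lTensor_tmul, Algebra.linearMap_apply, TensorProduct.rid_tmul]
      rw [Algebra.algebraMap_eq_smul_one, TensorProduct.tmul_smul, TensorProduct.smul_tmul']
  | add x y hx hy => rw [map_add, map_add, hx, hy, TensorProduct.add_tmul]

lemma count (ρ : A →ₐ[k] A ⊗[k] K) (hco : IsComoduleAlgebra ρ) (b : A) :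
    LinearMap.lTensor A (Algebra.linearMap k K ∘ₗ Coalgebra.counit (R := k) (A := K)) (ρ b)
      = b ⊗ₜ[k] (1 : K) := by
  rw [LinearMap.lTensor_comp, LinearMap.comp_apply, count_aux]
  congr 1
  have h := hco.counit_id b
  rw [show LinearMap.lTensor A (Coalgebra.counit (R := k) (A := K)) =
    TensorProduct.map LinearMap.id (Coalgebra.counit (R := k) (A := K)) from rfl]
  exact h

lemma galoisMap_tmul (ρ : A →ₐ[k] A ⊗[k] K) (a b : A) :
    galoisMap ρ (a ⊗ₜ[k] b) = (a ⊗ₜ[k] (1 : K)) * ρ b := by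
  simp [galoisMap]

lemma Phi_galoisMap (ρ : A →ₐ[k] A ⊗[k] K) (hco : IsComoduleAlgebra ρ) (a b : A) :
    Phi ρ (galoisMap ρ (a ⊗ₜ[k] b)) = ρ a * (b ⊗ₜ[k] (1 : K)) := by
  rw [galoisMap_tmul, Phi]
  simp only [LinearMap.comp_apply, LinearEquiv.coe_coe]
  rw [step1, key4]
  congr 1
  have coas := hco.coassoc b
  rw [show (LinearMap.rTensor K ρ.toLinearMap) (ρ b) =
    (TensorProduct.map ρ.toLinearMap LinearMap.id) (ρ b) from rfl, coas]
  rw [show (TensorProduct.map LinearMap.id (Coalgebra.comul (R := k) (A := K))) (ρ b) =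
    (LinearMap.lTensor A (Coalgebra.comul (R := k) (A := K))) (ρ b) from rfl]
  rw [← LinearMap.comp_apply, ← LinearMap.lTensor_comp]
  rw [show mAnti (k := k) (K := K) ∘ₗ Coalgebra.comul (R := k) (A := K) =
    Algebra.linearMap k K ∘ₗ Coalgebra.counit (R := k) (A := K) from ?_]
  · exact count ρ hco b
  · rw [mAnti, LinearMap.comp_assoc]
    exact HopfAlgebra.mul_antipode_lTensor_comul (R := k) (A := K)

/-- the flipped condition satisfied by kernel elements of the Galois map -/
lemma ker_flip (ρ : A →ₐ[k] A ⊗[k] K) (hco : IsComoduleAlgebra ρ) {n : ℕ} (a b : Fin n → A)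
    (hker : galoisMap ρ (∑ i, a i ⊗ₜ[k] b i) = 0) (h : Module.Dual k K) :
    ∑ i, Top ρ h (a i) * b i = 0 := by
  have h1 : ∑ i, ρ (a i) * (b i ⊗ₜ[k] (1 : K)) = 0 := by
    have : Phi ρ (galoisMap ρ (∑ i, a i ⊗ₜ[k] b i)) = 0 := by rw [hker, map_zero]
    rw [map_sum, map_sum] at this
    rw [← this]
    exact Finset.sum_congr rfl fun i _ => (Phi_galoisMap ρ hco (a i) (b i)).symm
  have h2 := congrArg (ctr h) h1
  rw [map_sum, map_zero] at h2
  rw [← h2]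
  exact Finset.sum_congr rfl fun i _ => by rw [ctr_mul_tmul_one]; rfl

/-- the representation of the "smash product" `A # K*` (as a free algebra on generators)
on `A` by left multiplications and the dual action -/
noncomputable def piS (ρ : A →ₐ[k] A ⊗[k] K) :
    FreeAlgebra k (A ⊕ Module.Dual k K) →ₐ[k] Module.End k A :=
  FreeAlgebra.lift k (Sum.elim (fun a => LinearMap.mulLeft k a) (fun h => Top ρ h))

@[simp] lemma piS_inl (a x : A) :
    piS ρ (FreeAlgebra.ι k (Sum.inl a : A ⊕ Module.Dual k K)) x = a * x := by
  simp [piS]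

@[simp] lemma piS_inr (h : Module.Dual k K) (x : A) :
    piS ρ (FreeAlgebra.ι k (Sum.inr h : A ⊕ Module.Dual k K)) x = Top ρ h x := by
  simp [piS]

/-- the solution space is stable under the action of the free algebra -/
lemma Zstab (hco : IsComoduleAlgebra ρ) {n : ℕ} (b : Fin n → A)
    (s : FreeAlgebra k (A ⊕ Module.Dual k K)) :
    ∀ c : Fin n → A, (∀ h : Module.Dual k K, ∑ i, Top ρ h (c i) * b i = 0) →
      ∀ h : Module.Dual k K, ∑ i, Top ρ h (piS ρ s (c i)) * b i = 0 := by
  induction s using FreeAlgebra.induction with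
  | grade0 r =>
      intro c hc h
      have he : ∀ i, piS ρ (algebraMap k (FreeAlgebra k (A ⊕ Module.Dual k K)) r) (c i)
          = r • c i := fun i => by
        rw [AlgHom.commutes]; exact Module.algebraMap_end_apply k k A r (c i)
      simp only [he, map_smul, smul_mul_assoc, ← Finset.smul_sum, hc h, smul_zero]
  | grade1 x =>
      intro c hc h
      cases x with
      | inl a =>
          simp only [piS_inl]
          calc ∑ i, Top ρ h (a * c i) * b i
              = ∑ i, ∑ j, Top ρ ((Module.finBasis k K).coord j) a *
                  (Top ρ (h ∘ₗ LinearMap.mulLeft k (Module.finBasis k K j)) (c i) * b i) := by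
                refine Finset.sum_congr rfl fun i _ => ?_
                rw [Top_mul, Finset.sum_mul]
                exact Finset.sum_congr rfl fun j _ => mul_assoc _ _ _
            _ = ∑ j, Top ρ ((Module.finBasis k K).coord j) a *
                  ∑ i, Top ρ (h ∘ₗ LinearMap.mulLeft k (Module.finBasis k K j)) (c i) * b i := by
                rw [Finset.sum_comm]
                exact Finset.sum_congr rfl fun j _ => (Finset.mul_sum _ _ _).symm
            _ = 0 := Finset.sum_eq_zero fun j _ => by rw [hc _, mul_zero]
      | inr g =>
          simp only [piS_inr]
          have : ∀ i, Top ρ h (Top ρ g (c i)) = Top ρ (h ∘ₗ Dop g) (c i) := fun i =>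
            Top_Top ρ hco h g (c i)
          simp only [this]
          exact hc _
  | mul s t hs ht =>
      intro c hc h
      have h1 := ht c hc
      have h2 := hs (fun i => piS ρ t (c i)) h1 h
      simpa only [map_mul, Module.End.mul_apply] using h2
  | add s t hs ht =>
      intro c hc h
      have h1 := hs c hc h
      have h2 := ht c hc h
      simp only [map_add, LinearMap.add_apply, add_mul]
      rw [Finset.sum_add_distrib, h1, h2, add_zero]

/-- The Jacobson-density-style lemma needed: in a simple module, given elements whose
last one is not in the "span" of the others over the commutant, there is a ring element
annihilating the others and mapping the last one anywhere we like. -/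
theorem density {R M : Type*} [Ring R] [AddCommGroup M] [Module R M] [IsSimpleModule R M]
    {n : ℕ} (a : Fin (n + 1) → M)
    (indep : ¬∃ c : Fin n → Module.End R M, a (Fin.last n) = ∑ i, c i (a i.castSucc))
    (y : M) :
    ∃ x : R, x • a (Fin.last n) = y ∧ ∀ i : Fin n, x • a i.castSucc = 0 := by
  classical
  let J : Submodule R M :=
    { carrier := {z | ∃ x : R, (∀ i : Fin n, x • a i.castSucc = 0) ∧ z = x • a (Fin.last n)}
      add_mem' := by
        rintro z w ⟨x, hx, rfl⟩ ⟨x', hx', rfl⟩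
        exact ⟨x + x', fun i => by rw [add_smul, hx i, hx' i, add_zero],
          (add_smul x x' _).symm⟩
      zero_mem' := ⟨0, fun i => zero_smul R _, (zero_smul R _).symm⟩
      smul_mem' := by
        rintro r z ⟨x, hx, rfl⟩
        exact ⟨r • x, fun i => by rw [smul_eq_mul, mul_smul, hx i, smul_zero],
          by rw [smul_eq_mul, mul_smul]⟩ }
  rcases eq_bot_or_eq_top J with hbot | htop
  · exfalso; apply indep
    set w : Fin n → M := fun i => a i.castSucc with hw
    set q : R →ₗ[R] (Fin n → M) := LinearMap.toSpanSingleton R (Fin n → M) w with hq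
    set φ : R →ₗ[R] M := LinearMap.toSpanSingleton R M (a (Fin.last n)) with hφ
    have hle : LinearMap.ker q ≤ LinearMap.ker φ := by
      intro x hx
      rw [LinearMap.mem_ker] at hx ⊢
      have hx' : ∀ i : Fin n, x • a i.castSucc = 0 := fun i => by
        have := congrFun hx i
        simpa [hq, LinearMap.toSpanSingleton_apply, hw] using this
      have hmem : φ x ∈ J := ⟨x, hx', by rw [hφ, LinearMap.toSpanSingleton_apply]⟩
      rw [hbot] at hmem
      exact (Submodule.mem_bot R).mp hmem
    let f : LinearMap.range q →ₗ[R] M :=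
      ((LinearMap.ker q).liftQ φ hle) ∘ₗ (q.quotKerEquivRange).symm.toLinearMap
    have hf : ∀ x : R, f ⟨q x, LinearMap.mem_range_self q x⟩ = φ x := by
      intro x
      have hsymm : (q.quotKerEquivRange).symm ⟨q x, LinearMap.mem_range_self q x⟩ =
          Submodule.Quotient.mk x := by
        rw [LinearEquiv.symm_apply_eq]
        exact Subtype.ext (q.quotKerEquivRange_apply_mk x).symm
      show ((LinearMap.ker q).liftQ φ hle) ((q.quotKerEquivRange).symm
        ⟨q x, LinearMap.mem_range_self q x⟩) = φ x
      rw [hsymm, Submodule.liftQ_apply]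
    haveI : IsSemisimpleModule R (Fin n → M) := by
      refine isSemisimpleModule_of_isSemisimpleModule_submodule'
        (p := fun i => LinearMap.range (LinearMap.single R (fun _ : Fin n => M) i))
        (fun i => ?_) ?_
      · exact IsSemisimpleModule.congr
          (LinearEquiv.ofInjective (LinearMap.single R (fun _ : Fin n => M) i)
            (fun u v huv => by
              have := congrFun (congrArg (fun z => (z : Fin n → M)) huv) i
              simpa using this)).symm
      · simp_rw [LinearMap.range_eq_map, Submodule.iSup_map_single, Submodule.pi_top]
    obtain ⟨W', hW'⟩ := exists_isCompl (LinearMap.range q)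
    let g : (Fin n → M) →ₗ[R] M := f ∘ₗ (LinearMap.range q).linearProjOfIsCompl W' hW'
    refine ⟨fun i => g ∘ₗ LinearMap.single R (fun _ : Fin n => M) i, ?_⟩
    have hq1 : q 1 = w := by rw [hq, LinearMap.toSpanSingleton_apply, one_smul]
    have hgw : g w = a (Fin.last n) := by
      have h1 : ((LinearMap.range q).linearProjOfIsCompl W' hW') (q 1) =
          ⟨q 1, LinearMap.mem_range_self q 1⟩ :=
        Submodule.linearProjOfIsCompl_apply_left hW' ⟨q 1, LinearMap.mem_range_self q 1⟩
      have h2 : g (q 1) = φ 1 := by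
        show f (((LinearMap.range q).linearProjOfIsCompl W' hW') (q 1)) = φ 1
        rw [h1, hf]
      rw [hq1] at h2
      rw [h2, hφ, LinearMap.toSpanSingleton_apply, one_smul]
    calc a (Fin.last n) = g w := hgw.symm
      _ = g (∑ i, LinearMap.single R (fun _ : Fin n => M) i (w i)) := by
          congr 1
          simp only [LinearMap.coe_single]
          exact (Finset.univ_sum_single w).symm
      _ = ∑ i, (g ∘ₗ LinearMap.single R (fun _ : Fin n => M) i) (a i.castSucc) := by
          rw [map_sum]; rfl
  · have hy : y ∈ J := htop ▸ Submodule.mem_top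
    obtain ⟨x, hx, hxy⟩ := hy
    exact ⟨x, hxy.symm, hx⟩

/-- characterization of equivariant endomorphisms: they are right multiplications
by coinvariants -/
lemma end_char (hco : IsComoduleAlgebra ρ) (φ : A → A)
    (hmul : ∀ a x : A, φ (a * x) = a * φ x)
    (hT : ∀ (h : Module.Dual k K) (x : A), φ (Top ρ h x) = Top ρ h (φ x)) :
    φ 1 ∈ coinvariants ρ ∧ ∀ x : A, φ x = x * φ 1 := by
  have hx : ∀ x : A, φ x = x * φ 1 := fun x => by rw [← mul_one x, hmul, mul_one]
  refine ⟨?_, hx⟩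
  show ρ (φ 1) = (φ 1) ⊗ₜ[k] 1
  have key : ∀ h : Module.Dual k K, ctr h (ρ (φ 1) - (φ 1) ⊗ₜ[k] (1 : K)) = 0 := by
    intro h
    have h1 : φ (Top ρ h 1) = Top ρ h (φ 1) := hT h 1
    rw [Top_one] at h1
    have h2 : φ (h 1 • (1 : A)) = h 1 • φ 1 := by
      rw [Algebra.smul_def, hmul, ← Algebra.smul_def]
    rw [h2] at h1
    rw [map_sub, ctr_tmul, ← Top_apply, ← h1, sub_self]
  exact sub_eq_zero.mp (ctr_sep key)

/-- using simplicity, produce an element of the free algebra annihilating the first `n`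
elements and sending the last to `1`. -/
lemma pick (hco : IsComoduleAlgebra ρ) [Nontrivial A]
    (hsimple : ∀ I : Submodule k A, (∀ a : A, ∀ x ∈ I, a * x ∈ I) →
      IsCostable ρ I → I = ⊥ ∨ I = ⊤)
    {n : ℕ} (a : Fin (n + 1) → A)
    (hind : ¬∃ c : Fin n → A, (∀ i, c i ∈ coinvariants ρ) ∧
      a (Fin.last n) = ∑ i, a i.castSucc * c i) :
    ∃ s : FreeAlgebra k (A ⊕ Module.Dual k K),
      piS ρ s (a (Fin.last n)) = 1 ∧ ∀ i : Fin n, piS ρ s (a i.castSucc) = 0 := by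
  letI : Module (FreeAlgebra k (A ⊕ Module.Dual k K)) A :=
    Module.compHom A (piS ρ).toRingHom
  have smul_eq : ∀ (s : FreeAlgebra k (A ⊕ Module.Dual k K)) (x : A),
      s • x = piS ρ s x := fun s x => rfl
  haveI : IsSimpleModule (FreeAlgebra k (A ⊕ Module.Dual k K)) A := by
    haveI : Nontrivial (Submodule (FreeAlgebra k (A ⊕ Module.Dual k K)) A) := by
      obtain ⟨z, hz⟩ := exists_ne (0 : A)
      exact ⟨⊥, ⊤, fun e => hz ((Submodule.mem_bot _).mp (e ▸ Submodule.mem_top))⟩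
    refine { toIsSimpleOrder := ⟨fun J => ?_⟩ }
    let I : Submodule k A :=
      { carrier := J
        add_mem' := J.add_mem
        zero_mem' := J.zero_mem
        smul_mem' := by
          intro r x hx
          have h1 : (algebraMap k (FreeAlgebra k (A ⊕ Module.Dual k K)) r) • x ∈ J :=
            J.smul_mem _ hx
          rwa [smul_eq, AlgHom.commutes, Module.algebraMap_end_apply k k A] at h1 }
    rcases hsimple I
      (fun a x hx => by
        have h1 : (FreeAlgebra.ι k (Sum.inl a : A ⊕ Module.Dual k K)) • x ∈ J :=
          J.smul_mem _ hx
        rwa [smul_eq, piS_inl] at h1)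
      (costable_of_T ρ I (fun h x hx => by
        have h1 : (FreeAlgebra.ι k (Sum.inr h : A ⊕ Module.Dual k K)) • x ∈ J :=
          J.smul_mem _ hx
        rwa [smul_eq, piS_inr] at h1)) with hI | hI
    · left
      ext x
      rw [Submodule.mem_bot]
      exact ⟨fun hx => (Submodule.mem_bot k).mp (by rw [← hI]; exact hx),
        fun hx => hx ▸ J.zero_mem⟩
    · right
      ext x
      simp only [Submodule.mem_top, iff_true]
      have : x ∈ I := by rw [hI]; trivial
      exact this
  have indep : ¬∃ c : Fin n → Module.End (FreeAlgebra k (A ⊕ Module.Dual k K)) A,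
      a (Fin.last n) = ∑ i, c i (a i.castSucc) := by
    rintro ⟨c, hc⟩
    apply hind
    have hprop : ∀ i : Fin n, (c i 1 ∈ coinvariants ρ) ∧ ∀ x, c i x = x * c i 1 := fun i =>
      end_char ρ hco (fun x => c i x)
        (fun a x => by
          have h1 := map_smul (c i) (FreeAlgebra.ι k (Sum.inl a : A ⊕ Module.Dual k K)) x
          rw [smul_eq, smul_eq, piS_inl, piS_inl] at h1
          exact h1)
        (fun h x => by
          have h1 := map_smul (c i) (FreeAlgebra.ι k (Sum.inr h : A ⊕ Module.Dual k K)) x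
          rw [smul_eq, smul_eq, piS_inr, piS_inr] at h1
          exact h1)
    exact ⟨fun i => c i 1, fun i => (hprop i).1, by
      rw [hc]; exact Finset.sum_congr rfl fun i _ => (hprop i).2 (a i.castSucc)⟩
  obtain ⟨x, hx1, hx0⟩ := density a indep 1
  exact ⟨x, by rw [← smul_eq]; exact hx1, fun i => by rw [← smul_eq]; exact hx0 i⟩

lemma easy_dir : balancedRelations ρ ≤ LinearMap.ker (galoisMap ρ) := by
  rw [balancedRelations, Submodule.span_le]
  rintro x ⟨a, b, c, hc, rfl⟩
  rw [SetLike.mem_coe, LinearMap.mem_ker, map_sub, galoisMap_tmul, galoisMap_tmul]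
  have hcc : ρ c = c ⊗ₜ[k] 1 := hc
  rw [map_mul, hcc, ← mul_assoc, Algebra.TensorProduct.tmul_mul_tmul, mul_one, sub_self]

lemma main_ind (hco : IsComoduleAlgebra ρ) [Nontrivial A]
    (hsimple : ∀ I : Submodule k A, (∀ a : A, ∀ x ∈ I, a * x ∈ I) →
      IsCostable ρ I → I = ⊥ ∨ I = ⊤) (n : ℕ) :
    ∀ a b : Fin n → A, galoisMap ρ (∑ i, a i ⊗ₜ[k] b i) = 0 →
      (∑ i, a i ⊗ₜ[k] b i) ∈ balancedRelations ρ := by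
  induction n with
  | zero =>
      intro a b _
      rw [Finset.univ_eq_empty, Finset.sum_empty]
      exact zero_mem _
  | succ n ih =>
      intro a b hker
      by_cases hc : ∃ c : Fin n → A, (∀ i, c i ∈ coinvariants ρ) ∧
          a (Fin.last n) = ∑ i, a i.castSucc * c i
      · obtain ⟨c, hcC, hlast⟩ := hc
        set u' : A ⊗[k] A :=
          ∑ i : Fin n, a i.castSucc ⊗ₜ[k] (b i.castSucc + c i * b (Fin.last n)) with hu'
        have hdiff : (∑ i, a i ⊗ₜ[k] b i) - u' ∈ balancedRelations ρ := by
          rw [hu', Fin.sum_univ_castSucc (f := fun i => a i ⊗ₜ[k] b i)]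
          have expand : ∑ i : Fin n, a i.castSucc ⊗ₜ[k] (b i.castSucc + c i * b (Fin.last n)) =
              (∑ i : Fin n, a i.castSucc ⊗ₜ[k] b i.castSucc) +
                ∑ i : Fin n, a i.castSucc ⊗ₜ[k] (c i * b (Fin.last n)) := by
            rw [← Finset.sum_add_distrib]
            exact Finset.sum_congr rfl fun i _ => TensorProduct.tmul_add _ _ _
          rw [expand, hlast, TensorProduct.sum_tmul, add_sub_add_left_eq_sub,
            ← Finset.sum_sub_distrib]
          exact Submodule.sum_mem _ fun i _ => Submodule.subset_span
            ⟨a i.castSucc, b (Fin.last n), c i, hcC i, rfl⟩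
        have hker' : galoisMap ρ u' = 0 := by
          have h2 : galoisMap ρ ((∑ i, a i ⊗ₜ[k] b i) - u') = 0 :=
            LinearMap.mem_ker.mp (easy_dir ρ hdiff)
          rw [map_sub, hker, zero_sub, neg_eq_zero] at h2
          exact h2
        have h3 := ih _ _ hker'
        have h4 : (∑ i, a i ⊗ₜ[k] b i) = ((∑ i, a i ⊗ₜ[k] b i) - u') + u' :=
          (sub_add_cancel _ _).symm
        rw [h4]
        exact add_mem hdiff h3
      · obtain ⟨s, hs1, hs0⟩ := pick ρ hco hsimple a hc
        have hflip : ∀ h, ∑ i, Top ρ h (a i) * b i = 0 := ker_flip ρ hco a b hker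
        have hz := Zstab ρ hco b s a hflip (Coalgebra.counit (R := k) (A := K))
        have hb : b (Fin.last n) = 0 := by
          rw [Fin.sum_univ_castSucc
            (f := fun i => Top ρ (Coalgebra.counit (R := k) (A := K)) (piS ρ s (a i)) * b i)]
            at hz
          simp only [hs0, hs1, map_zero, zero_mul, Finset.sum_const_zero, zero_add] at hz
          rwa [Top_counit ρ hco, one_mul] at hz
        have hsum : (∑ i, a i ⊗ₜ[k] b i) = ∑ i : Fin n, a i.castSucc ⊗ₜ[k] b i.castSucc := by
          rw [Fin.sum_univ_castSucc (f := fun i => a i ⊗ₜ[k] b i), hb,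
            TensorProduct.tmul_zero, add_zero]
        rw [hsum] at hker ⊢
        exact ih _ _ hker

end Stmt9


/-- let `H` be a finite dimensional Hopf algebra and `A` a nonzero
`H`-module algebra (a `K`-comodule algebra for `K = H*`) with no `H`-stable left ideals
other than `0` and `A`.  Then the Galois map `γ : A ⊗_{A^H} A → A ⊗ H*` is injective;
equivalently the kernel of `β : A ⊗[k] A → A ⊗ K`, `a ⊗ b ↦ (a ⊗ 1)·ρ(b)`, is exactly
the submodule of `A^H`-balancing relations. -/
theorem galois_map_injective_of_no_stable_left_ideals
    (ρ : A →ₐ[k] A ⊗[k] K) (hco : IsComoduleAlgebra ρ)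
    [Nontrivial A]
    (hsimple : ∀ I : Submodule k A, (∀ a : A, ∀ x ∈ I, a * x ∈ I) →
      IsCostable ρ I → I = ⊥ ∨ I = ⊤) :
    LinearMap.ker (galoisMap ρ) = balancedRelations ρ := by
  apply le_antisymm
  · intro u hu
    obtain ⟨t, ht⟩ := TensorProduct.exists_finset u
    have hconv : u = ∑ i : Fin t.card,
        (↑(t.equivFin.symm i) : A × A).1 ⊗ₜ[k] (↑(t.equivFin.symm i) : A × A).2 := by
      rw [ht, ← Finset.sum_coe_sort t (fun p => p.1 ⊗ₜ[k] p.2)]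
      exact (Equiv.sum_comp t.equivFin.symm
        (fun x : {x // x ∈ t} => (x : A × A).1 ⊗ₜ[k] (x : A × A).2)).symm
    rw [hconv] at hu ⊢
    exact Stmt9.main_ind ρ hco hsimple t.card _ _ (LinearMap.mem_ker.mp hu)
  · exact Stmt9.easy_dir ρ
end

section
/- Let H be a semisimple finite dimensional Hopf algebra, A an H-module algebra, and M a right A-module with a compatible H-module structure (an H-equivariant module, i.e., a module over A^op # H^cop). If the trace map t̂ : A → A^H, a ↦ ta (t an integral of H with ε(t) = 1), is surjective, then the assignment U ↦ UA is an injective, order-preserving map from the lattice of A^H-submodules of M^H into the lattice of A-submodules of M, with t(UA) = U for all A^H-submodules U ⊆ M^H. Consequently M^H is a noetherian (resp. artinian) A^H-module whenever M is a noetherian (resp. artinian) A-module. -/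
open TensorProduct

variable {k : Type*} [Field k]
variable {H : Type*} [Ring H] [HopfAlgebra k H] [FiniteDimensional k H]
variable {A : Type*} [Ring A] [Algebra k A]

variable {M : Type*} [AddCommGroup M] [Module k M]

/-- The action of `H` on `M ⊗[k] A` through the comultiplication of `H`. -/
noncomputable def tensorActMA (actM : H →ₗ[k] M →ₗ[k] M) (act : H →ₗ[k] A →ₗ[k] A) :
    H →ₗ[k] (M ⊗[k] A) →ₗ[k] (M ⊗[k] A) :=
  (TensorProduct.homTensorHomMap (RingHom.id k) M A M A).comp
    ((TensorProduct.map actM act).comp (Coalgebra.comul (R := k) (A := H)))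

/-- `(actM, μ)` makes `M` an `H`-equivariant right `A`-module: `M` is a right `A`-module
via `μ : M ⊗ A → M` and a left `H`-module via `actM`, and `μ` is `H`-linear, i.e. `M` is
a module over `A^op # H^cop`. -/
structure IsEquivariantRightModule (act : H →ₗ[k] A →ₗ[k] A)
    (actM : H →ₗ[k] M →ₗ[k] M) (μ : M ⊗[k] A →ₗ[k] M) : Prop where
  actM_one : ∀ m : M, actM 1 m = m
  actM_mul : ∀ g h : H, ∀ m : M, actM (g * h) m = actM g (actM h m)
  smul_one : ∀ m : M, μ (m ⊗ₜ[k] (1 : A)) = m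
  smul_mul : ∀ (m : M) (a b : A), μ ((μ (m ⊗ₜ[k] a)) ⊗ₜ[k] b) = μ (m ⊗ₜ[k] (a * b))
  compat : ∀ h : H, μ.comp (tensorActMA actM act h) = (actM h).comp μ


/-- Key identity: if `m` is `H`-invariant, then `actM h (μ (m ⊗ a)) = μ (m ⊗ act h a)`. -/
theorem actM_mu_key (act : H →ₗ[k] A →ₗ[k] A)
    (actM : H →ₗ[k] M →ₗ[k] M) (μ : M ⊗[k] A →ₗ[k] M)
    (hc : ∀ h : H, μ.comp (tensorActMA actM act h) = (actM h).comp μ)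
    (m : M) (hminv : ∀ h : H, actM h m = Coalgebra.counit (R := k) h • m)
    (h : H) (a : A) :
    actM h (μ (m ⊗ₜ[k] a)) = μ (m ⊗ₜ[k] act h a) := by
  have h1 : actM h (μ (m ⊗ₜ[k] a)) = μ (tensorActMA actM act h (m ⊗ₜ[k] a)) :=
    (LinearMap.congr_fun (hc h) (m ⊗ₜ a)).symm
  have hF : tensorActMA actM act h (m ⊗ₜ[k] a)
      = TensorProduct.map (actM.flip m) (act.flip a) (Coalgebra.comul (R := k) h) := by
    show (TensorProduct.homTensorHomMap (RingHom.id k) M A M A)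
        ((TensorProduct.map actM act) (Coalgebra.comul (R := k) h)) (m ⊗ₜ a) = _
    induction Coalgebra.comul (R := k) (A := H) h using TensorProduct.induction_on with
    | zero => simp
    | tmul x y => simp
    | add x y hx hy => simp [hx, hy]
  have hFG : μ ∘ₗ TensorProduct.map (actM.flip m) (act.flip a)
      = (μ ∘ₗ (TensorProduct.mk k M A m) ∘ₗ (act.flip a)) ∘ₗ
        (TensorProduct.lid k H).toLinearMap ∘ₗ
        ((Coalgebra.counit (R := k) (A := H)).rTensor H) := by
    apply TensorProduct.ext'
    intro x y
    simp [hminv x, smul_tmul', tmul_smul]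
  rw [h1, hF, ← LinearMap.comp_apply, hFG]
  simp [Coalgebra.rTensor_counit_comul]

/-- `H` semisimple with normalized integral `t`; `A` an `H`-module algebra
with surjective trace `t̂ : A → A^H`; `M` an `H`-equivariant right `A`-module.  For an
`A^H`-submodule `U` of `M^H` (a `k`-submodule of `M` consisting of invariants and stable
under the invariant elements of `A`) let `UA` be the `A`-submodule of `M` it generates.
Then `t(UA) = U`, the assignment `U ↦ UA` is an order embedding of the lattice of
`A^H`-submodules of `M^H` into the lattice of `A`-submodules of `M`, and consequently
`M^H` is a noetherian (resp. artinian) `A^H`-module whenever `M` is a noetherian (resp.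
artinian) `A`-module. -/
theorem trace_surjective_lattice_embedding
    [IsSemisimpleRing H]
    (act : H →ₗ[k] A →ₗ[k] A) (hma : IsModuleAlgebra act)
    (actM : H →ₗ[k] M →ₗ[k] M) (μ : M ⊗[k] A →ₗ[k] M)
    (hm : IsEquivariantRightModule act actM μ)
    (t : H) (hti : ∀ h : H, h * t = Coalgebra.counit (R := k) h • t)
    (htn : Coalgebra.counit (R := k) t = 1)
    (htr : ∀ b : A, (∀ h : H, act h b = Coalgebra.counit (R := k) h • b) →
      ∃ a : A, act t a = b) :
    -- the eligible submodules and the extension operation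
    (∀ U : Submodule k M,
      (∀ m ∈ U, ∀ h : H, actM h m = Coalgebra.counit (R := k) h • m) →
      (∀ m ∈ U, ∀ c : A, (∀ h : H, act h c = Coalgebra.counit (R := k) h • c) →
        μ (m ⊗ₜ[k] c) ∈ U) →
      -- (i) `t(UA) = U`
      (actM t) '' (Submodule.span k {x : M | ∃ m ∈ U, ∃ a : A, x = μ (m ⊗ₜ[k] a)} : Set M)
        = (U : Set M)) ∧
    -- (i') `U ↦ UA` is an order embedding (hence injective and order-preserving)
    (∀ U V : Submodule k M,
      (∀ m ∈ U, ∀ h : H, actM h m = Coalgebra.counit (R := k) h • m) →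
      (∀ m ∈ U, ∀ c : A, (∀ h : H, act h c = Coalgebra.counit (R := k) h • c) →
        μ (m ⊗ₜ[k] c) ∈ U) →
      (∀ m ∈ V, ∀ h : H, actM h m = Coalgebra.counit (R := k) h • m) →
      (∀ m ∈ V, ∀ c : A, (∀ h : H, act h c = Coalgebra.counit (R := k) h • c) →
        μ (m ⊗ₜ[k] c) ∈ V) →
      (Submodule.span k {x : M | ∃ m ∈ U, ∃ a : A, x = μ (m ⊗ₜ[k] a)} ≤
        Submodule.span k {x : M | ∃ m ∈ V, ∃ a : A, x = μ (m ⊗ₜ[k] a)} ↔ U ≤ V)) ∧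
    -- (ii) artinian descent
    ((∀ f : ℕ → Submodule k M, Antitone f →
        (∀ n, ∀ m ∈ f n, ∀ a : A, μ (m ⊗ₜ[k] a) ∈ f n) →
        ∃ N, ∀ n, N ≤ n → f n = f N) →
      ∀ f : ℕ → Submodule k M, Antitone f →
        (∀ n, ∀ m ∈ f n, ∀ h : H, actM h m = Coalgebra.counit (R := k) h • m) →
        (∀ n, ∀ m ∈ f n, ∀ c : A,
          (∀ h : H, act h c = Coalgebra.counit (R := k) h • c) → μ (m ⊗ₜ[k] c) ∈ f n) →
        ∃ N, ∀ n, N ≤ n → f n = f N) ∧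
    -- (iii) noetherian descent
    ((∀ f : ℕ → Submodule k M, Monotone f →
        (∀ n, ∀ m ∈ f n, ∀ a : A, μ (m ⊗ₜ[k] a) ∈ f n) →
        ∃ N, ∀ n, N ≤ n → f n = f N) →
      ∀ f : ℕ → Submodule k M, Monotone f →
        (∀ n, ∀ m ∈ f n, ∀ h : H, actM h m = Coalgebra.counit (R := k) h • m) →
        (∀ n, ∀ m ∈ f n, ∀ c : A,
          (∀ h : H, act h c = Coalgebra.counit (R := k) h • c) → μ (m ⊗ₜ[k] c) ∈ f n) →
        ∃ N, ∀ n, N ≤ n → f n = f N) := by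
  have tinv : ∀ a : A, ∀ h : H, act h (act t a) = Coalgebra.counit (R := k) h • act t a := by
    intro a h
    rw [← hma.act_mul, hti]
    simp
  have tfix : ∀ m : M, (∀ h : H, actM h m = Coalgebra.counit (R := k) h • m) →
      actM t m = m := by
    intro m hmm
    rw [hmm t, htn, one_smul]
  have key : ∀ m : M, (∀ h : H, actM h m = Coalgebra.counit (R := k) h • m) →
      ∀ (h : H) (a : A), actM h (μ (m ⊗ₜ[k] a)) = μ (m ⊗ₜ[k] act h a) :=
    fun m hmm h a => actM_mu_key act actM μ hm.compat m hmm h a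
  -- part (i)
  have part1 : ∀ U : Submodule k M,
      (∀ m ∈ U, ∀ h : H, actM h m = Coalgebra.counit (R := k) h • m) →
      (∀ m ∈ U, ∀ c : A, (∀ h : H, act h c = Coalgebra.counit (R := k) h • c) →
        μ (m ⊗ₜ[k] c) ∈ U) →
      (actM t) '' (Submodule.span k {x : M | ∃ m ∈ U, ∃ a : A, x = μ (m ⊗ₜ[k] a)} : Set M)
        = (U : Set M) := by
    intro U hU1 hU2
    rw [← Submodule.map_coe, Submodule.map_span]
    suffices h : Submodule.span k
        ((actM t) '' {x : M | ∃ m ∈ U, ∃ a : A, x = μ (m ⊗ₜ[k] a)}) = U by rw [h]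
    apply le_antisymm
    · rw [Submodule.span_le]
      rintro _ ⟨x, hx, rfl⟩
      obtain ⟨m, hmU, a, rfl⟩ := hx
      rw [key m (hU1 m hmU) t a]
      exact hU2 m hmU _ (tinv a)
    · intro m hmU
      have hmem : actM t (μ (m ⊗ₜ[k] (1 : A)))
          ∈ (actM t) '' {x : M | ∃ m ∈ U, ∃ a : A, x = μ (m ⊗ₜ[k] a)} :=
        ⟨μ (m ⊗ₜ[k] (1 : A)), ⟨m, hmU, 1, rfl⟩, rfl⟩
      rw [hm.smul_one, tfix m (hU1 m hmU)] at hmem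
      exact Submodule.subset_span hmem
  -- stability of the span under the full `A`-action
  have stab : ∀ U : Submodule k M, ∀ x ∈ Submodule.span k
      {x : M | ∃ m ∈ U, ∃ a : A, x = μ (m ⊗ₜ[k] a)}, ∀ b : A,
      μ (x ⊗ₜ[k] b) ∈ Submodule.span k {x : M | ∃ m ∈ U, ∃ a : A, x = μ (m ⊗ₜ[k] a)} := by
    intro U x hx b
    induction hx using Submodule.span_induction with
    | mem x hxS =>
      obtain ⟨m, hmU, a, rfl⟩ := hxS
      rw [hm.smul_mul]
      exact Submodule.subset_span ⟨m, hmU, a * b, rfl⟩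
    | zero => simp
    | add x y _ _ hx' hy' =>
      rw [TensorProduct.add_tmul, map_add]
      exact Submodule.add_mem _ hx' hy'
    | smul c x _ hx' =>
      rw [← TensorProduct.smul_tmul', map_smul]
      exact Submodule.smul_mem _ _ hx'
  refine ⟨part1, ?_, ?_, ?_⟩
  · -- part (i')
    intro U V hU1 hU2 hV1 hV2
    constructor
    · intro hle m hmU
      have h1 : μ (m ⊗ₜ[k] (1 : A))
          ∈ Submodule.span k {x : M | ∃ m ∈ V, ∃ a : A, x = μ (m ⊗ₜ[k] a)} :=
        hle (Submodule.subset_span ⟨m, hmU, 1, rfl⟩)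
      have h2 : actM t (μ (m ⊗ₜ[k] (1 : A))) ∈ (V : Set M) := by
        rw [← part1 V hV1 hV2]
        exact ⟨_, h1, rfl⟩
      rwa [hm.smul_one, tfix m (hU1 m hmU)] at h2
    · intro hUV
      apply Submodule.span_mono
      rintro x ⟨m, hmU, a, rfl⟩
      exact ⟨m, hUV hmU, a, rfl⟩
  · -- part (ii)
    intro hch f hanti hf1 hf2
    obtain ⟨N, hN⟩ := hch
      (fun n => Submodule.span k {x : M | ∃ m ∈ f n, ∃ a : A, x = μ (m ⊗ₜ[k] a)})
      (fun i j hij => Submodule.span_mono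
        (fun x ⟨m, hmf, a, hx⟩ => ⟨m, hanti hij hmf, a, hx⟩))
      (fun n => stab (f n))
    refine ⟨N, fun n hn => le_antisymm (hanti hn) ?_⟩
    intro m hmN
    have h1 : μ (m ⊗ₜ[k] (1 : A))
        ∈ Submodule.span k {x : M | ∃ m' ∈ f n, ∃ a : A, x = μ (m' ⊗ₜ[k] a)} := by
      rw [hN n hn]
      exact Submodule.subset_span ⟨m, hmN, 1, rfl⟩
    have h2 : actM t (μ (m ⊗ₜ[k] (1 : A))) ∈ ((f n) : Set M) := by
      rw [← part1 (f n) (hf1 n) (hf2 n)]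
      exact ⟨_, h1, rfl⟩
    rwa [hm.smul_one, tfix m (hf1 N m hmN)] at h2
  · -- part (iii)
    intro hch f hmono hf1 hf2
    obtain ⟨N, hN⟩ := hch
      (fun n => Submodule.span k {x : M | ∃ m ∈ f n, ∃ a : A, x = μ (m ⊗ₜ[k] a)})
      (fun i j hij => Submodule.span_mono
        (fun x ⟨m, hmf, a, hx⟩ => ⟨m, hmono hij hmf, a, hx⟩))
      (fun n => stab (f n))
    refine ⟨N, fun n hn => le_antisymm ?_ (hmono hn)⟩
    intro m hmn
    have h1 : μ (m ⊗ₜ[k] (1 : A))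
        ∈ Submodule.span k {x : M | ∃ m' ∈ f N, ∃ a : A, x = μ (m' ⊗ₜ[k] a)} := by
      rw [← hN n hn]
      exact Submodule.subset_span ⟨m, hmn, 1, rfl⟩
    have h2 : actM t (μ (m ⊗ₜ[k] (1 : A))) ∈ ((f N) : Set M) := by
      rw [← part1 (f N) (hf1 N) (hf2 N)]
      exact ⟨_, h1, rfl⟩
    rwa [hm.smul_one, tfix m (hf1 n m hmn)] at h2
end
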